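/- For any vectors c, d ∈ ℝ³, with E₁₂ = [c]×, E₂₃ = [d]×, E₃₁ = −[c]× − [d]×, one has E₂₃ᵀE₁₂* + E₂₃*E₁₂ᵀ + (E₁₂E₂₃) ◇ E₃₁ᵀ = 0, where A ◇ B = (A − B)* − A* − B* and * denotes adjugate. -/

import Mathlib

/-!
For `3 × 3` matrices the adjugate is a quadratic form, and Cayley–Hamilton gives its polarization
`(A + B)* - A* - B* = AB + BA - tr A • B - tr B • A + (tr A tr B - tr (AB)) • 1`,
so `A ◇ B` is explicit in `A`, `B`, their products and traces. For cross-product matrices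
`[a]×* = a aᵀ`, `[c]× [d]× = d cᵀ - (c ⬝ d) • 1` and `[a]×` acts by the cross product. With
`A = [c]× [d]×` and `B = E₃₁ᵀ = [c + d]×` every trace except `tr A = -2 (c ⬝ d)` vanishes, and
`A ◇ B = -((c × d) cᵀ + d (c × d)ᵀ)`, which is exactly minus the sum of the first two terms.
-/

open Matrix

/-- The cross-product matrix of a vector `a ∈ ℝ³`. -/
def skew (a : Fin 3 → ℝ) : Matrix (Fin 3) (Fin 3) ℝ :=
  !![0, -a 2, a 1; a 2, 0, -a 0; -a 1, a 0, 0]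

/-- The operation `A ◇ B = (A − B)* − A* − B*`. -/
def dia (A B : Matrix (Fin 3) (Fin 3) ℝ) : Matrix (Fin 3) (Fin 3) ℝ :=
  (A - B).adjugate - A.adjugate - B.adjugate

theorem Matrix.adjugate_add_fin_three {R : Type*} [CommRing R] (A B : Matrix (Fin 3) (Fin 3) R) :
    (A + B).adjugate = A.adjugate + B.adjugate + (A * B + B * A) - A.trace • B - B.trace • A
      + (A.trace * B.trace - (A * B).trace) • 1 := by
  ext i j
  fin_cases i <;> fin_cases j <;>
    simp [adjugate_fin_three, mul_apply, Fin.sum_univ_three, trace_fin_three] <;> ring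

theorem Matrix.adjugate_neg_fin_three {R : Type*} [CommRing R] (A : Matrix (Fin 3) (Fin 3) R) :
    (-A).adjugate = A.adjugate := by
  simpa using adjugate_smul (-1 : R) A

theorem dia_eq (A B : Matrix (Fin 3) (Fin 3) ℝ) :
    dia A B = A.trace • B + B.trace • A - (A * B + B * A)
      - (A.trace * B.trace - (A * B).trace) • 1 := by
  rw [dia, sub_eq_add_neg A B, adjugate_add_fin_three, adjugate_neg_fin_three]
  simp only [trace_neg, mul_neg, neg_mul]
  module

section skew

variable (a b : Fin 3 → ℝ)

theorem skew_mulVec : skew a *ᵥ b = a ⨯₃ b := by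
  ext i; fin_cases i <;> simp [skew, cross_apply, mulVec, dotProduct, Fin.sum_univ_three] <;> ring

theorem vecMul_skew : b ᵥ* skew a = b ⨯₃ a := by
  ext i; fin_cases i <;> simp [skew, cross_apply, vecMul, dotProduct, Fin.sum_univ_three] <;> ring

theorem transpose_skew : (skew a)ᵀ = -skew a := by
  ext i j; fin_cases i <;> fin_cases j <;> simp [skew]

theorem skew_add : skew (a + b) = skew a + skew b := by
  ext i j; fin_cases i <;> fin_cases j <;> simp [skew] <;> ring

theorem trace_skew : (skew a).trace = 0 := by
  simp [skew, trace_fin_three]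

theorem adjugate_skew : (skew a).adjugate = vecMulVec a a := by
  ext i j; fin_cases i <;> fin_cases j <;> simp [skew, adjugate_fin_three, vecMulVec_apply] <;> ring

theorem skew_mul_skew : skew a * skew b = vecMulVec b a - (a ⬝ᵥ b) • 1 := by
  ext i j; fin_cases i <;> fin_cases j <;>
    simp [skew, mul_apply, Fin.sum_univ_three, vecMulVec_apply, dotProduct] <;> ring

end skew

theorem dia_skew_mul_skew_skew_add (c d : Fin 3 → ℝ) :
    dia (skew c * skew d) (skew (c + d)) = -(vecMulVec (c ⨯₃ d) c + vecMulVec d (c ⨯₃ d)) := by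
  set A := skew c * skew d
  set B := skew (c + d)
  have hA : A = vecMulVec d c - (c ⬝ᵥ d) • 1 := skew_mul_skew c d
  have hAB : A * B = vecMulVec d (c ⨯₃ d) - (c ⬝ᵥ d) • B := by
    rw [hA, sub_mul, vecMulVec_mul, vecMul_skew, smul_mul, one_mul, map_add, cross_self, zero_add]
  have hBA : B * A = vecMulVec (c ⨯₃ d) c - (c ⬝ᵥ d) • B := by
    rw [hA, mul_sub, mul_vecMulVec, skew_mulVec, Matrix.mul_smul, mul_one, map_add,
      LinearMap.add_apply, cross_self, add_zero]
  have htrA : A.trace = -2 * (c ⬝ᵥ d) := by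
    rw [hA, trace_sub, trace_vecMulVec, trace_smul, trace_one, dotProduct_comm]
    norm_num; ring
  have htrAB : (A * B).trace = 0 := by
    rw [hAB, trace_sub, trace_vecMulVec, dot_cross_self, trace_smul, trace_skew, smul_zero, sub_zero]
  rw [dia_eq, htrA, htrAB, trace_skew, hAB, hBA]
  module

/-- With `E₁₂ = [c]×`, `E₂₃ = [d]×`, `E₃₁ = −[c]× − [d]×`:
`E₂₃ᵀE₁₂* + E₂₃*E₁₂ᵀ + (E₁₂E₂₃) ◇ E₃₁ᵀ = 0`. -/
theorem skew_diamond_constraint (c d : Fin 3 → ℝ) :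
    (skew d)ᵀ * (skew c).adjugate + (skew d).adjugate * (skew c)ᵀ
      + dia (skew c * skew d) (-skew c - skew d)ᵀ = 0 := by
  have h₃₁ : (-skew c - skew d)ᵀ = skew (c + d) := by
    rw [transpose_sub, transpose_neg, transpose_skew, transpose_skew, skew_add]
    abel
  have h_transpose_adj : (skew d)ᵀ * (skew c).adjugate = vecMulVec (c ⨯₃ d) c := by
    rw [transpose_skew, adjugate_skew, neg_mul, mul_vecMulVec, skew_mulVec, ← neg_vecMulVec,
      cross_anticomm]
  have h_adj_transpose : (skew d).adjugate * (skew c)ᵀ = vecMulVec d (c ⨯₃ d) := by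
    rw [transpose_skew, adjugate_skew, mul_neg, vecMulVec_mul, vecMul_skew, ← vecMulVec_neg,
      cross_anticomm]
  rw [h_transpose_adj, h_adj_transpose, h₃₁, dia_skew_mul_skew_skew_add, add_neg_cancel]
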